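/- arXiv:1708.08092 — 2 statements merged into one kernel-verified Lean document; each statement's English description precedes it below -/
import Mathlib

section
/- Let C be a Q-linear idempotent-complete symmetric monoidal category and X an object of C such that the third exterior power ∧³X = 0. Then for every partition λ = (n₁, …, n_r) with r ≥ 3 parts, the Schur functor S_λ applied to X vanishes: S_λ(X) = 0. -/
open Finset

/-- The (unnormalized) antisymmetrizer over the set `S` of tensor factors:
`∑_{σ ∈ Perm(S)} sgn(σ) · σ` in the rational group algebra of `Σ_n`. -/
noncomputable def altSum (n : ℕ) (S : Finset (Fin n)) :
    MonoidAlgebra ℚ (Equiv.Perm (Fin n)) :=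
  ∑ σ ∈ Finset.univ.filter (fun σ : Equiv.Perm (Fin n) => ∀ i ∉ S, σ i = i),
    ((Equiv.Perm.sign σ : ℤ) : ℚ) • MonoidAlgebra.single σ 1

/-- The row symmetrizer `a_λ = ∑_{σ ∈ row stabilizer} σ` of a tableau whose cell
coordinates (row, column) are given by `c`. -/
noncomputable def rowSym (n : ℕ) (c : Fin n → ℕ × ℕ) :
    MonoidAlgebra ℚ (Equiv.Perm (Fin n)) :=
  ∑ σ ∈ Finset.univ.filter (fun σ : Equiv.Perm (Fin n) => ∀ x, (c (σ x)).1 = (c x).1),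
    MonoidAlgebra.single σ (1 : ℚ)

/-- The column antisymmetrizer `b_λ = ∑_{σ ∈ column stabilizer} sgn(σ) · σ`. -/
noncomputable def colAlt (n : ℕ) (c : Fin n → ℕ × ℕ) :
    MonoidAlgebra ℚ (Equiv.Perm (Fin n)) :=
  ∑ σ ∈ Finset.univ.filter (fun σ : Equiv.Perm (Fin n) => ∀ x, (c (σ x)).2 = (c x).2),
    ((Equiv.Perm.sign σ : ℤ) : ℚ) • MonoidAlgebra.single σ 1


/-
Since `λ` has at least three rows, some column contains a set `T` of three cells.
Right multiplication by a permutation `h` that preserves columns permutes the column stabilizer,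
so `b_λ · h = sgn(h) · b_λ`; summing over the permutations of `T` gives
`b_λ · altSum T = |Perm T| · b_λ`. Hence `φ(a_λ b_λ) · φ(altSum T) = |Perm T| · φ(a_λ b_λ)`,
whose left side vanishes by `∧³X = 0`, and `|Perm T| ≠ 0` in `ℚ`.
-/

lemma Equiv.Perm.apply_mem_of_forall_notMem_eq {α : Type*} {T : Finset α} {h : Equiv.Perm α}
    (hh : ∀ i ∉ T, h i = i) {x : α} (hx : x ∈ T) : h x ∈ T := by
  by_contra hmem
  rw [h.injective (hh _ hmem)] at hmem
  exact hmem hx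

lemma Equiv.Perm.sign_cast_mul_self {α : Type*} [DecidableEq α] [Fintype α] (σ : Equiv.Perm α) :
    ((Equiv.Perm.sign σ : ℤ) : ℚ) * ((Equiv.Perm.sign σ : ℤ) : ℚ) = 1 := by
  exact_mod_cast Int.units_coe_mul_self _

section Columns

variable {n : ℕ} {c : Fin n → ℕ × ℕ}

lemma col_apply_eq_of_forall_notMem_eq {T : Finset (Fin n)} {j : ℕ}
    (hT : ∀ x ∈ T, (c x).2 = j) {h : Equiv.Perm (Fin n)} (hh : ∀ i ∉ T, h i = i) (x : Fin n) :
    (c (h x)).2 = (c x).2 := by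
  by_cases hx : x ∈ T
  · rw [hT _ (Equiv.Perm.apply_mem_of_forall_notMem_eq hh hx), hT _ hx]
  · rw [hh _ hx]

lemma colAlt_mul_single {h : Equiv.Perm (Fin n)} (hh : ∀ x, (c (h x)).2 = (c x).2) :
    colAlt n c * MonoidAlgebra.single h 1 = ((Equiv.Perm.sign h : ℤ) : ℚ) • colAlt n c := by
  have hinv (x : Fin n) : (c (h⁻¹ x)).2 = (c x).2 := by simpa using (hh (h⁻¹ x)).symm
  rw [colAlt, sum_mul, smul_sum]
  refine sum_equiv (Equiv.mulRight h) (fun σ => ?_) (fun σ _ => ?_)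
  · simp only [mem_filter, mem_univ, true_and, Equiv.coe_mulRight, Equiv.Perm.mul_apply]
    exact ⟨fun hσ x => by rw [hσ, hh], fun hσ x => by rw [← hinv x]; simpa using hσ (h⁻¹ x)⟩
  · simp only [smul_mul_assoc, MonoidAlgebra.single_mul_single, one_mul, Equiv.coe_mulRight,
      smul_smul, map_mul, Units.val_mul, Int.cast_mul]
    congr 1
    linear_combination (-((Equiv.Perm.sign σ : ℤ) : ℚ)) * h.sign_cast_mul_self

lemma colAlt_mul_altSum {T : Finset (Fin n)} {j : ℕ} (hT : ∀ x ∈ T, (c x).2 = j) :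
    colAlt n c * altSum n T =
      (#{σ : Equiv.Perm (Fin n) | ∀ i ∉ T, σ i = i} : ℚ) • colAlt n c := by
  rw [altSum, mul_sum, card_eq_sum_ones, Nat.cast_sum, sum_smul]
  refine sum_congr rfl fun h hh => ?_
  rw [mul_smul_comm, colAlt_mul_single
      (col_apply_eq_of_forall_notMem_eq hT (mem_filter.1 hh).2), smul_smul,
    h.sign_cast_mul_self, Nat.cast_one]

lemma exists_column_card_eq_three
    (hYoung : ∀ p : ℕ × ℕ, p ∈ Set.range c →
      ∀ q : ℕ × ℕ, q.1 ≤ p.1 → q.2 ≤ p.2 → q ∈ Set.range c)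
    (hrows : ∃ x : Fin n, 2 ≤ (c x).1) :
    ∃ T : Finset (Fin n), T.card = 3 ∧ ∃ j, ∀ x ∈ T, (c x).2 = j := by
  obtain ⟨x, hx⟩ := hrows
  have cell (i : ℕ) (hi : i ≤ 2) : ∃ y, c y = (i, (c x).2) :=
    hYoung (c x) ⟨x, rfl⟩ (i, (c x).2) (hi.trans hx) le_rfl
  obtain ⟨y₀, hy₀⟩ := cell 0 (by norm_num)
  obtain ⟨y₁, hy₁⟩ := cell 1 (by norm_num)
  obtain ⟨y₂, hy₂⟩ := cell 2 (by norm_num)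
  refine ⟨{y₀, y₁, y₂}, card_eq_three.2 ⟨y₀, y₁, y₂, ?_, ?_, ?_, rfl⟩, (c x).2, ?_⟩
  · exact ne_of_apply_ne c (by simp [hy₀, hy₁])
  · exact ne_of_apply_ne c (by simp [hy₀, hy₂])
  · exact ne_of_apply_ne c (by simp [hy₁, hy₂])
  · simp [hy₀, hy₁, hy₂]

end Columns

theorem stmt_2_general (n : ℕ) (A : Type) [Ring A] [Algebra ℚ A]
    (φ : MonoidAlgebra ℚ (Equiv.Perm (Fin n)) →ₐ[ℚ] A)
    (c : Fin n → ℕ × ℕ)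
    (hYoung : ∀ p : ℕ × ℕ, p ∈ Set.range c →
      ∀ q : ℕ × ℕ, q.1 ≤ p.1 → q.2 ≤ p.2 → q ∈ Set.range c)
    (hrows : ∃ x : Fin n, 2 ≤ (c x).1)
    (h3 : ∀ S : Finset (Fin n), S.card = 3 → φ (altSum n S) = 0) :
    φ (rowSym n c * colAlt n c) = 0 := by
  obtain ⟨T, hT3, j, hTj⟩ := exists_column_card_eq_three hYoung hrows
  have hN : (#{σ : Equiv.Perm (Fin n) | ∀ i ∉ T, σ i = i} : ℚ) ≠ 0 :=
    Nat.cast_ne_zero.2 (card_ne_zero.2 ⟨1, by simp⟩)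
  have key : φ (rowSym n c * colAlt n c) * φ (altSum n T) =
      (#{σ : Equiv.Perm (Fin n) | ∀ i ∉ T, σ i = i} : ℚ) • φ (rowSym n c * colAlt n c) := by
    rw [← map_mul, mul_assoc, colAlt_mul_altSum hTj, mul_smul_comm, map_smul]
  rw [h3 T hT3, mul_zero, eq_comm, smul_eq_zero] at key
  exact key.resolve_left hN

/-- Let `C` be a `ℚ`-linear idempotent-complete symmetric monoidal category
and `X` an object with `∧³X = 0`.  Encode the action of the symmetric group `Σ_n` on
`X^{⊗n}` by an algebra homomorphism `φ : ℚ[Σ_n] → A := End(X^{⊗n})`.  In an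
idempotent-complete additive category, the image of the (quasi-idempotent) Young
symmetrizer `c_λ = a_λ · b_λ` vanishes iff `φ(c_λ) = 0`, and `∧³X = 0` says exactly that
the antisymmetrizer of any 3-element set of tensor factors acts by zero.  Then for every
partition `λ = (n₁, …, n_r)` of `n` with `r ≥ 3` rows — encoded by an injective filling
`c : Fin n → ℕ × ℕ` (cell coordinates `(row, column)`) whose image is a downward-closed
Young diagram reaching row index `2` — the Schur functor `S_λ(X)` vanishes:
`φ(a_λ · b_λ) = 0`. -/
theorem stmt_2 (n : ℕ) (A : Type) [Ring A] [Algebra ℚ A]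
    (φ : MonoidAlgebra ℚ (Equiv.Perm (Fin n)) →ₐ[ℚ] A)
    (c : Fin n → ℕ × ℕ) (hc : Function.Injective c)
    (hYoung : ∀ p : ℕ × ℕ, p ∈ Set.range c →
      ∀ q : ℕ × ℕ, q.1 ≤ p.1 → q.2 ≤ p.2 → q ∈ Set.range c)
    (hrows : ∃ x : Fin n, 2 ≤ (c x).1)
    (h3 : ∀ S : Finset (Fin n), S.card = 3 → φ (altSum n S) = 0) :
    φ (rowSym n c * colAlt n c) = 0 :=
  stmt_2_general n A φ c hYoung hrows h3
end

section
/- Let A, B be strict full subcategories of a triangulated category T and define A ⋆ B to be the full subcategory of objects X fitting into a distinguished triangle A → X → B → A[1] with A ∈ A, B ∈ B. Then the operation ⋆ is associative up to equality of subcategories: (A ⋆ B) ⋆ C = A ⋆ (B ⋆ C) for strict full subcategories A, B, C of T. -/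
open CategoryTheory Limits Pretriangulated

universe v u

/-- The star operation on classes of objects of a triangulated category: `X ∈ A ⋆ B` iff
`X` fits into a distinguished triangle `A → X → B → A[1]` with `A ∈ A`, `B ∈ B`. -/
def starCls {C : Type u} [Category.{v} C] [HasZeroObject C] [Preadditive C]
    [HasShift C ℤ] [∀ n : ℤ, (shiftFunctor C n).Additive] [Pretriangulated C]
    (P Q : C → Prop) : C → Prop := fun X =>
  ∃ (A B : C) (_ : P A) (_ : Q B) (f : A ⟶ X) (g : X ⟶ B) (h : B ⟶ (A⟦(1 : ℤ)⟧ : C)),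
    Triangle.mk f g h ∈ (distTriang C)

/-- Membership of the middle object of a distinguished triangle in a star class. -/
lemma starCls_of_dist {C : Type u} [Category.{v} C] [HasZeroObject C] [Preadditive C]
    [HasShift C ℤ] [∀ n : ℤ, (shiftFunctor C n).Additive] [Pretriangulated C]
    {P Q : C → Prop} (T : Triangle C) (hT : T ∈ distTriang C)
    (h1 : P T.obj₁) (h3 : Q T.obj₃) : starCls P Q T.obj₂ :=
  ⟨T.obj₁, T.obj₃, h1, h3, T.mor₁, T.mor₂, T.mor₃, hT⟩

/-- For strict (isomorphism-closed) full subcategories `A`, `B`, `C` of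
a triangulated category `T`, the star operation is associative:
`(A ⋆ B) ⋆ C = A ⋆ (B ⋆ C)` (a consequence of the octahedral axiom). -/
theorem stmt_12 {T : Type u} [Category.{v} T] [HasZeroObject T] [Preadditive T]
    [HasShift T ℤ] [∀ n : ℤ, (shiftFunctor T n).Additive] [Pretriangulated T]
    [IsTriangulated T]
    (P Q R : T → Prop)
    (hP : ∀ X Y : T, (X ≅ Y) → P X → P Y)
    (hQ : ∀ X Y : T, (X ≅ Y) → Q X → Q Y)
    (hR : ∀ X Y : T, (X ≅ Y) → R X → R Y) :
    ∀ X : T, starCls (starCls P Q) R X ↔ starCls P (starCls Q R) X := by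
  intro X
  constructor
  · rintro ⟨E, Cc, ⟨A, B, hA, hB, a, b, c, hAB⟩, hC, f, g, h, hT⟩
    obtain ⟨Y, v, w, hY⟩ := distinguished_cocone_triangle (a ≫ f)
    have oct := Triangulated.someOctahedron rfl hAB hT hY
    exact ⟨A, Y, hA, starCls_of_dist _ oct.mem hB hC, a ≫ f, v, w, hY⟩
  · rintro ⟨A, Y, hA, ⟨B, Cc, hB, hC, b, v, c, hBC⟩, f, g, w, hT⟩
    obtain ⟨Z, vz, wz, hZ⟩ := distinguished_cocone_triangle (g ≫ v)
    have oct := Triangulated.someOctahedron rfl (rot_of_distTriang _ hT)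
      (rot_of_distTriang _ hBC) hZ
    -- `oct.mem` is a distinguished triangle `A⟦1⟧ → Z → B⟦1⟧ → A⟦1⟧⟦1⟧`.
    have hZmem : starCls P Q (Z⟦(-1 : ℤ)⟧) := by
      have h3 := inv_rot_of_distTriang _ (inv_rot_of_distTriang _
        (inv_rot_of_distTriang _ oct.mem))
      refine starCls_of_dist _ h3 ?_ ?_
      · exact hP A _ ((shiftFunctorCompIsoId T (1 : ℤ) (-1) (by norm_num)).symm.app A) hA
      · exact hQ B _ ((shiftFunctorCompIsoId T (1 : ℤ) (-1) (by norm_num)).symm.app B) hB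
    exact starCls_of_dist _ (inv_rot_of_distTriang _ hZ) hZmem hC
end
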